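/- arXiv:2602.10927 — 2 statements merged into one kernel-verified Lean document; each statement's English description precedes it below -/
import Mathlib

section
/- Let g : ℝ → ℝ be continuous, 1-periodic, with ∫₀¹ g = 0, and let φ ∈ C¹([0,L]) where L = Nl for positive integers N (so [0,L] is exactly covered by full cells). Then ∑_{n=0}^{N−1} ∫_{nl}^{(n+1)l} φ(x) (1/l) g(x/l) dx → p₀ ∫₀^L φ'(x) dx as l = L/N → 0, with p₀ = ∫₀¹ y g(y) dy. -/
/-!
Let `G(x) = ∫₀ˣ g`. Since `g` has mean zero, `G` is `1`-periodic and vanishes at the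
integers, so on the commensurate domain the boundary terms of an integration by parts vanish
and the cell sums equal `-∫₀^L φ'(x) G(x/l) dx`. As `l → 0`, `G(·/l)` converges weakly to its
mean `∫₀¹ G = -p₀`: on each cell `φ'` is almost constant, and `G(·/l)` integrates to exactly
`l ∫₀¹ G` over any interval of length `l`.
-/

open MeasureTheory Filter Topology Real

theorem Function.Periodic.periodic_primitive_of_integral_eq_zero {g : ℝ → ℝ} {T : ℝ}
    (hg : Function.Periodic g T) (hint : ∀ a b, IntervalIntegrable g volume a b)
    (h0 : ∫ x in 0..T, g x = 0) :
    Function.Periodic (fun x => ∫ t in 0..x, g t) T := fun x => by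
  simpa [h0] using hg.intervalIntegral_add_eq_add 0 x hint

theorem integral_id_mul_eq_neg_integral_primitive {g : ℝ → ℝ} {T : ℝ} (hg : Continuous g)
    (h0 : ∫ x in 0..T, g x = 0) :
    ∫ y in 0..T, y * g y = -∫ y in 0..T, ∫ t in 0..y, g t := by
  have := intervalIntegral.integral_mul_deriv_eq_deriv_mul (a := 0) (b := T)
    (fun x _ => hasDerivAt_id x)
    (fun x _ => (hg.integral_hasStrictDerivAt 0 x).hasDerivAt)
    intervalIntegrable_const (hg.intervalIntegrable _ _)
  simpa [h0] using this

theorem integral_mul_const_mul_comp_mul_eq {φ g : ℝ → ℝ} (hφ : ContDiff ℝ 1 φ)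
    (hg : Continuous g) (c a b : ℝ) :
    ∫ x in a..b, φ x * (c * g (x * c))
      = φ b * (∫ t in 0..b * c, g t) - φ a * (∫ t in 0..a * c, g t)
        - ∫ x in a..b, deriv φ x * ∫ t in 0..x * c, g t := by
  have hG (x : ℝ) : HasDerivAt (fun x => ∫ t in 0..x * c, g t) (c * g (x * c)) x := by
    exact ((hg.integral_hasStrictDerivAt 0 (x * c)).hasDerivAt.comp x
      (hasDerivAt_mul_const c)).congr_deriv (mul_comm _ _)
  exact intervalIntegral.integral_mul_deriv_eq_deriv_mul
    (fun x _ => (hφ.differentiable one_ne_zero x).hasDerivAt) (fun x _ => hG x)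
    ((hφ.continuous_deriv le_rfl).intervalIntegrable _ _)
    (Continuous.intervalIntegrable (by fun_prop) _ _)

theorem sum_integral_cells {f : ℝ → ℝ} (hf : ∀ a b, IntervalIntegrable f volume a b)
    (l : ℝ) (N : ℕ) :
    ∑ n ∈ Finset.range N, ∫ x in (n : ℝ) * l..((n : ℝ) + 1) * l, f x
      = ∫ x in 0..(N : ℝ) * l, f x := by
  simpa using intervalIntegral.sum_integral_adjacent_intervals
    (a := fun k : ℕ => (k : ℝ) * l) (n := N) fun k _ => hf _ _

theorem Function.Periodic.intervalIntegral_comp_div_add_self {h : ℝ → ℝ}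
    (hper : Function.Periodic h 1) {l : ℝ} (hl : l ≠ 0) (a : ℝ) :
    ∫ x in a..a + l, h (x / l) = l * ∫ y in 0..1, h y := by
  rw [intervalIntegral.integral_comp_div h hl, add_div, div_self hl,
    hper.intervalIntegral_add_eq _ 0, zero_add, smul_eq_mul]

theorem abs_integral_cell_mul_comp_div_sub_le {h ψ : ℝ → ℝ} (hper : Function.Periodic h 1)
    (hh : Continuous h) (hψ : Continuous ψ) {M ε l a : ℝ} (hl : 0 < l)
    (hM : ∀ y, |h y| ≤ M)
    (hε : ∀ x ∈ Set.Icc a (a + l), |ψ x - ψ a| ≤ ε) :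
    |(∫ x in a..a + l, ψ x * h (x / l)) - (∫ y in 0..1, h y) * ∫ x in a..a + l, ψ x|
      ≤ ε * l * (M + |∫ y in 0..1, h y|) := by
  set c := ∫ y in 0..1, h y
  have hfirst_eq : ∫ x in a..a + l, (ψ x - ψ a) * h (x / l)
      = (∫ x in a..a + l, ψ x * h (x / l)) - ψ a * (l * c) := by
    simp_rw [sub_mul]
    rw [intervalIntegral.integral_sub (Continuous.intervalIntegrable (by fun_prop) _ _)
      (Continuous.intervalIntegrable (by fun_prop) _ _), intervalIntegral.integral_const_mul,
      hper.intervalIntegral_comp_div_add_self hl.ne']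
  have hsecond_eq : ∫ x in a..a + l, (ψ x - ψ a) = (∫ x in a..a + l, ψ x) - l * ψ a := by
    rw [intervalIntegral.integral_sub (hψ.intervalIntegrable _ _) intervalIntegrable_const,
      intervalIntegral.integral_const, add_sub_cancel_left, smul_eq_mul]
  have hosc : ∀ x ∈ Set.uIoc a (a + l), |ψ x - ψ a| ≤ ε := fun x hx =>
    hε x (Set.uIcc_of_le (le_add_of_nonneg_right hl.le) ▸ Set.uIoc_subset_uIcc hx)
  have hfirst : |∫ x in a..a + l, (ψ x - ψ a) * h (x / l)| ≤ ε * M * l := by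
    have := intervalIntegral.norm_integral_le_of_norm_le_const
      (f := fun x => (ψ x - ψ a) * h (x / l)) fun x hx => by
        rw [norm_mul, norm_eq_abs, norm_eq_abs]
        exact mul_le_mul (hosc x hx) (hM _) (abs_nonneg _) ((abs_nonneg _).trans (hosc x hx))
    rwa [add_sub_cancel_left, abs_of_pos hl, norm_eq_abs] at this
  have hsecond : |∫ x in a..a + l, (ψ x - ψ a)| ≤ ε * l := by
    have := intervalIntegral.norm_integral_le_of_norm_le_const
      (f := fun x => ψ x - ψ a) fun x hx => (norm_eq_abs _).trans_le (hosc x hx)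
    rwa [add_sub_cancel_left, abs_of_pos hl, norm_eq_abs] at this
  have hsplit : (∫ x in a..a + l, ψ x * h (x / l)) - c * ∫ x in a..a + l, ψ x
      = (∫ x in a..a + l, (ψ x - ψ a) * h (x / l)) - c * ∫ x in a..a + l, (ψ x - ψ a) := by
    rw [hfirst_eq, hsecond_eq]; ring
  rw [hsplit]
  calc _ ≤ |∫ x in a..a + l, (ψ x - ψ a) * h (x / l)|
          + |c| * |∫ x in a..a + l, (ψ x - ψ a)| := (abs_sub _ _).trans_eq (by rw [abs_mul])
    _ ≤ ε * M * l + |c| * (ε * l) := by gcongr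
    _ = ε * l * (M + |c|) := by ring

theorem abs_integral_mul_comp_div_sub_le {h ψ : ℝ → ℝ} (hper : Function.Periodic h 1)
    (hh : Continuous h) (hψ : Continuous ψ) {M η l : ℝ} {N : ℕ} (hl : 0 < l)
    (hM : ∀ y, |h y| ≤ M)
    (hη : ∀ x ∈ Set.Icc 0 (N * l), ∀ y ∈ Set.Icc 0 (N * l),
      |x - y| ≤ l → |ψ x - ψ y| ≤ η) :
    |(∫ x in 0..N * l, ψ x * h (x / l)) - (∫ y in 0..1, h y) * ∫ x in 0..N * l, ψ x|
      ≤ η * (M + |∫ y in 0..1, h y|) * (N * l) := by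
  set c := ∫ y in 0..1, h y
  have hcell : ∀ n ∈ Finset.range N,
      |(∫ x in (n : ℝ) * l..((n : ℝ) + 1) * l, ψ x * h (x / l))
        - c * ∫ x in (n : ℝ) * l..((n : ℝ) + 1) * l, ψ x| ≤ η * l * (M + |c|) := by
    intro n hn
    have hnN : (n : ℝ) + 1 ≤ N := by exact_mod_cast Finset.mem_range.mp hn
    have h0 : 0 ≤ (n : ℝ) * l := by positivity
    have h1 : (n : ℝ) * l + l ≤ N * l := by nlinarith
    rw [add_one_mul]
    refine abs_integral_cell_mul_comp_div_sub_le hper hh hψ hl hM fun x hx =>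
      hη x ⟨by linarith [hx.1], by linarith [hx.2]⟩ _ ⟨h0, by linarith⟩ ?_
    rw [abs_le]
    constructor <;> linarith [hx.1, hx.2]
  rw [← sum_integral_cells (f := fun x => ψ x * h (x / l))
      fun _ _ => Continuous.intervalIntegrable (by fun_prop) _ _,
    ← sum_integral_cells fun _ _ => hψ.intervalIntegrable _ _, Finset.mul_sum,
    ← Finset.sum_sub_distrib]
  calc _ ≤ _ := Finset.abs_sum_le_sum_abs _ _
    _ ≤ ∑ n ∈ Finset.range N, η * l * (M + |c|) := Finset.sum_le_sum hcell
    _ = η * (M + |c|) * (N * l) := by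
      rw [Finset.sum_const, Finset.card_range, nsmul_eq_mul]; ring

theorem tendsto_integral_mul_comp_mul_div_atTop {h ψ : ℝ → ℝ} {L : ℝ} (hL : 0 < L)
    (hper : Function.Periodic h 1) (hh : Continuous h) (hψ : Continuous ψ) :
    Tendsto (fun N : ℕ => ∫ x in 0..L, ψ x * h (x * N / L)) atTop
      (𝓝 ((∫ y in 0..1, h y) * ∫ x in 0..L, ψ x)) := by
  set c := ∫ y in 0..1, h y
  obtain ⟨M, hM⟩ := (hper.isBounded_of_continuous one_ne_zero hh).exists_norm_le
  replace hM : ∀ y, |h y| ≤ M := fun y => hM _ ⟨y, rfl⟩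
  set K := (M + |c|) * L
  have hK : 0 ≤ K := mul_nonneg (add_nonneg ((abs_nonneg _).trans (hM 0)) (abs_nonneg c)) hL.le
  rw [Metric.tendsto_atTop]
  intro ε hε
  obtain ⟨δ, hδ, hψδ⟩ := Metric.uniformContinuousOn_iff.mp
    (isCompact_Icc.uniformContinuousOn_of_continuous hψ.continuousOn :
      UniformContinuousOn ψ (Set.Icc 0 L)) (ε / (K + 1)) (by positivity)
  obtain ⟨N₀, hN₀⟩ := exists_nat_gt (L / δ)
  refine ⟨N₀ + 1, fun N hN => ?_⟩
  have hNN₀ : (N₀ : ℝ) + 1 ≤ N := by exact_mod_cast hN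
  have hN : (0 : ℝ) < N := by linarith [N₀.cast_nonneg (α := ℝ)]
  have hlδ : L / N < δ := by
    rw [div_lt_iff₀ hN, ← div_lt_iff₀' hδ]
    linarith
  have hNl : (N : ℝ) * (L / N) = L := mul_div_cancel₀ _ hN.ne'
  have hη : ∀ x ∈ Set.Icc 0 ((N : ℝ) * (L / N)), ∀ y ∈ Set.Icc 0 ((N : ℝ) * (L / N)),
      |x - y| ≤ L / N → |ψ x - ψ y| ≤ ε / (K + 1) := by
    rw [hNl]
    exact fun x hx y hy hxy => (hψδ x hx y hy (by rw [dist_eq]; linarith)).le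
  have hbound := abs_integral_mul_comp_div_sub_le hper hh hψ (div_pos hL hN) hM hη
  simp_rw [hNl, ← div_div_eq_mul_div] at hbound ⊢
  rw [dist_eq]
  calc _ ≤ ε / (K + 1) * K := hbound.trans_eq (mul_assoc _ _ _)
    _ < ε := by rw [div_mul_eq_mul_div, div_lt_iff₀ (by positivity)]; nlinarith

/-- bulk polarization theorem in one dimension on a commensurate
domain `[0, L]`, `L = N l`: the cell-wise sums converge to `p₀ ∫₀^L φ'`. -/
theorem stmt_9 (g φ : ℝ → ℝ) (L : ℝ) (hL : 0 < L) (hg : Continuous g)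
    (hper : ∀ x, g (x + 1) = g x) (hmean : ∫ y in (0:ℝ)..1, g y = 0)
    (hφ : ContDiff ℝ 1 φ) :
    Tendsto (fun N : ℕ => ∑ n ∈ Finset.range N,
        ∫ x in ((n : ℝ) * (L / (N : ℝ)))..(((n : ℝ) + 1) * (L / (N : ℝ))),
          φ x * (((N : ℝ) / L) * g (x * (N : ℝ) / L)))
      atTop (𝓝 ((∫ y in (0:ℝ)..1, y * g y) * ∫ x in (0:ℝ)..L, deriv φ x)) := by
  have hint (a b : ℝ) : IntervalIntegrable g volume a b := hg.intervalIntegrable a b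
  set G : ℝ → ℝ := fun x => ∫ t in 0..x, g t
  have hGper : Function.Periodic G 1 :=
    Function.Periodic.periodic_primitive_of_integral_eq_zero hper hint hmean
  have hG_nat (N : ℕ) : ∫ t in 0..(N : ℝ), g t = 0 := by
    simpa [G] using hGper.nat_mul_eq N
  have hcells : ∀ N : ℕ, N ≠ 0 → (∑ n ∈ Finset.range N,
        ∫ x in ((n : ℝ) * (L / (N : ℝ)))..(((n : ℝ) + 1) * (L / (N : ℝ))),
          φ x * (((N : ℝ) / L) * g (x * (N : ℝ) / L)))
      = -∫ x in 0..L, deriv φ x * G (x * N / L) := by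
    intro N hN
    rw [sum_integral_cells fun _ _ => Continuous.intervalIntegrable (by fun_prop) _ _,
      mul_div_cancel₀ _ (Nat.cast_ne_zero.mpr hN)]
    simp_rw [mul_div_assoc]
    rw [integral_mul_const_mul_comp_mul_eq hφ hg, mul_div_cancel₀ _ hL.ne', hG_nat, zero_mul,
      intervalIntegral.integral_same]
    simp [G]
  rw [integral_id_mul_eq_neg_integral_primitive hg hmean, neg_mul]
  have hlim := tendsto_integral_mul_comp_mul_div_atTop hL hGper
    (intervalIntegral.continuous_primitive hint 0) (hφ.continuous_deriv le_rfl)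
  exact hlim.neg.congr' ((eventually_ne_atTop 0).mono fun N hN => (hcells N hN).symm)
end

section
/- Let g be 1-periodic, bounded, with ∫₀¹ g = 0, and let φ ∈ C¹([0,L]) where L is not necessarily an integer multiple of l. Writing N = ⌊L/l⌋, the contribution of the partial cell is ∫_{Nl}^L φ(x)(1/l)g(x/l) dx = φ(L) σ_l + o(1), where σ_l := ∫_0^{(L−Nl)/l} g(y) dy is bounded, and any limit point σ of σ_l gives the surface charge at x = L: lim over a subsequence of ∫₀^L φ (1/l) g(x/l) dx = p₀ ∫₀^L φ' dx + φ(L)σ. -/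
/-!
With `G x = ∫₀ˣ g`, the mean-zero condition makes `G` 1-periodic and bounded, and `G (x / l)` is an
(absolutely continuous) antiderivative of `(1 / l) g (x / l)`. Integrating by parts from a cell
boundary `n l`, where `G` vanishes, gives `φ(b) G(b / l) - ∫ φ' G(x / l)`. On the partial cell
the integral is `O(l)`, and `G(L / l) = G(fract (L / l)) = σ_l`. On `[0, L]`, `G(x / l)` converges
weakly to its mean `∫₀¹ G = -∫₀¹ y g(y) dy`: for `C¹` test functions, integrate by parts once more
against the bounded antiderivative of `G - ∫₀¹ G`, which gains a factor `l`, and then pass to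
continuous test functions by Weierstrass approximation.
-/

open MeasureTheory Filter Topology Real

theorem intervalIntegrable_of_abs_le {f : ℝ → ℝ} {C : ℝ} (hm : Measurable f)
    (hb : ∀ x, |f x| ≤ C) (a b : ℝ) : IntervalIntegrable f volume a b :=
  intervalIntegrable_const.mono_fun' hm.aestronglyMeasurable (ae_of_all _ hb)

theorem Function.Periodic.periodic_intervalIntegral {f : ℝ → ℝ} {T : ℝ}
    (hf : Function.Periodic f T) (hint : ∀ a b, IntervalIntegrable f volume a b)
    (hmean : ∫ x in (0:ℝ)..T, f x = 0) :
    Function.Periodic (fun x => ∫ t in (0:ℝ)..x, f t) T := fun x => by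
  simp only [hf.intervalIntegral_add_eq_add 0 x hint, zero_add, hmean, add_zero]

theorem Function.Periodic.map_fract {α : Type*} {f : ℝ → α} (hf : Function.Periodic f 1)
    (x : ℝ) : f (Int.fract x) = f x := by
  simpa only [mul_one, Int.self_sub_floor] using hf.sub_int_mul_eq (x := x) ⌊x⌋

theorem abs_intervalIntegral_le_of_periodic {f : ℝ → ℝ} {B : ℝ}
    (hf : Function.Periodic f 1) (hm : Measurable f) (hb : ∀ x, |f x| ≤ B)
    (hmean : ∫ x in (0:ℝ)..1, f x = 0) (x : ℝ) :
    |∫ t in (0:ℝ)..x, f t| ≤ B := by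
  have hB : 0 ≤ B := (abs_nonneg _).trans (hb 0)
  rw [← (hf.periodic_intervalIntegral (intervalIntegrable_of_abs_le hm hb) hmean).map_fract x,
    ← Real.norm_eq_abs]
  calc ‖∫ t in (0:ℝ)..Int.fract x, f t‖ ≤ B * |Int.fract x - 0| :=
        intervalIntegral.norm_integral_le_of_norm_le_const fun t _ => hb t
    _ ≤ B * 1 := by
        rw [sub_zero, abs_of_nonneg (Int.fract_nonneg x)]
        exact mul_le_mul_of_nonneg_left (Int.fract_lt_one x).le hB
    _ = B := mul_one B

theorem intervalIntegral_comp_div_eq_sub {f : ℝ → ℝ}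
    (hf : ∀ a b, IntervalIntegrable f volume a b) {l : ℝ} (hl : l ≠ 0) (a b : ℝ) :
    ∫ t in a..b, f (t / l) = l * ((∫ t in (0:ℝ)..b / l, f t) - ∫ t in (0:ℝ)..a / l, f t) := by
  rw [intervalIntegral.integral_comp_div f hl, smul_eq_mul,
    intervalIntegral.integral_interval_sub_left (hf _ _) (hf _ _)]

theorem AbsolutelyContinuousOnInterval.integral_mul_eq_sub_integral_deriv_mul
    {f h : ℝ → ℝ} {a b : ℝ} (hf : AbsolutelyContinuousOnInterval f a b)
    (hh : IntervalIntegrable h volume a b) :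
    ∫ x in a..b, f x * h x
      = f b * (∫ x in a..b, h x) - ∫ x in a..b, deriv f x * ∫ t in a..x, h t := by
  have hH := hh.absolutelyContinuousOnInterval_intervalIntegral (c := a) Set.left_mem_uIcc
  have parts := hf.integral_mul_deriv_eq_deriv_mul hH
  rw [intervalIntegral.integral_same, mul_zero, sub_zero] at parts
  rw [← parts]
  refine intervalIntegral.integral_congr_ae ?_
  filter_upwards [hh.ae_hasDerivAt_integral] with x hx hxab
  rw [(hx (Set.uIoc_subset_uIcc hxab) a Set.left_mem_uIcc).deriv]

theorem integral_mul_comp_div_eq {φ g : ℝ → ℝ} {a b l : ℝ}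
    (hφ : AbsolutelyContinuousOnInterval φ a b) (hg : ∀ a b, IntervalIntegrable g volume a b)
    (hl : l ≠ 0) :
    ∫ x in a..b, φ x * ((1 / l) * g (x / l))
      = φ b * ((∫ t in (0:ℝ)..b / l, g t) - ∫ t in (0:ℝ)..a / l, g t)
        - ∫ x in a..b, deriv φ x * ((∫ t in (0:ℝ)..x / l, g t) - ∫ t in (0:ℝ)..a / l, g t) := by
  have hscaled : ∀ x, ∫ t in a..x, (1 / l) * g (t / l)
      = (∫ t in (0:ℝ)..x / l, g t) - ∫ t in (0:ℝ)..a / l, g t := fun x => by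
    rw [intervalIntegral.integral_const_mul, intervalIntegral_comp_div_eq_sub hg hl,
      one_div, inv_mul_cancel_left₀ hl]
  have hint : IntervalIntegrable (fun x => (1 / l) * g (x / l)) volume a b := by
    have h := (hg (a / l) (b / l)).comp_mul_right (c := l⁻¹)
    simp only [div_inv_eq_mul, div_mul_cancel₀ _ hl, ← div_eq_mul_inv] at h
    exact h.const_mul _
  simp only [hφ.integral_mul_eq_sub_integral_deriv_mul hint, hscaled]

theorem tendsto_integral_mul_comp_div_of_contDiff {K q : ℝ → ℝ} {C : ℝ}
    (hK : Function.Periodic K 1) (hm : Measurable K) (hb : ∀ x, |K x| ≤ C)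
    (hmean : ∫ x in (0:ℝ)..1, K x = 0) (hq : ContDiff ℝ 1 q) (a b : ℝ) :
    Tendsto (fun l => ∫ x in a..b, q x * K (x / l)) (𝓝[>] 0) (𝓝 0) := by
  set H : ℝ → ℝ := fun x => ∫ t in (0:ℝ)..x, K t
  have hH : ∀ x, |H x| ≤ C := abs_intervalIntegral_le_of_periodic hK hm hb hmean
  obtain ⟨C', hC'⟩ : ∃ C', ∀ x ∈ Set.uIcc a b, ‖deriv q x‖ ≤ C' :=
    isCompact_uIcc.exists_bound_of_continuousOn (hq.continuous_deriv le_rfl).continuousOn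
  set R : ℝ → ℝ := fun l =>
    q b * (H (b / l) - H (a / l)) - ∫ x in a..b, deriv q x * (H (x / l) - H (a / l))
  -- `l H (x / l)` is an antiderivative of `K (x / l)`, so integrating by parts gains a factor `l`.
  have hparts : ∀ l ≠ 0, ∫ x in a..b, q x * K (x / l) = l * R l := by
    intro l hl
    simp only [R]
    rw [← integral_mul_comp_div_eq hq.contDiffOn.absolutelyContinuousOnInterval
      (intervalIntegrable_of_abs_le hm hb) hl, ← intervalIntegral.integral_const_mul]
    refine intervalIntegral.integral_congr fun x _ => ?_
    field_simp
  have hR : ∀ l, |R l| ≤ |q b| * (2 * C) + C' * (2 * C) * |b - a| := by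
    intro l
    have hdiff : ∀ x, |H (x / l) - H (a / l)| ≤ 2 * C := fun x =>
      (abs_sub _ _).trans (by linarith [hH (x / l), hH (a / l)])
    refine (abs_sub _ _).trans (add_le_add ?_ ?_)
    · rw [abs_mul]; exact mul_le_mul_of_nonneg_left (hdiff b) (abs_nonneg _)
    · rw [← Real.norm_eq_abs]
      refine intervalIntegral.norm_integral_le_of_norm_le_const fun x hx => ?_
      rw [norm_mul, Real.norm_eq_abs]
      exact mul_le_mul (hC' x (Set.uIoc_subset_uIcc hx)) (hdiff x) (abs_nonneg _)
        ((norm_nonneg _).trans (hC' a Set.left_mem_uIcc))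
  have hlR : Tendsto (fun l => l * R l) (𝓝[>] 0) (𝓝 0) :=
    (tendsto_nhdsWithin_of_tendsto_nhds tendsto_id).zero_mul_isBoundedUnder_le
      (isBoundedUnder_of ⟨_, hR⟩)
  refine hlR.congr' ?_
  filter_upwards [self_mem_nhdsWithin] with l (hl : 0 < l)
  exact (hparts l hl.ne').symm

theorem tendsto_integral_mul_comp_div_of_integral_eq_zero {K ψ : ℝ → ℝ} {C a b : ℝ}
    (hK : Function.Periodic K 1) (hm : Measurable K) (hb : ∀ x, |K x| ≤ C)
    (hmean : ∫ x in (0:ℝ)..1, K x = 0) (hψ : ContinuousOn ψ (Set.uIcc a b)) :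
    Tendsto (fun l => ∫ x in a..b, ψ x * K (x / l)) (𝓝[>] 0) (𝓝 0) := by
  have hC : 0 ≤ C := (abs_nonneg _).trans (hb 0)
  rw [Metric.tendsto_nhds]
  intro ε hε
  set δ := ε / (2 * ((C + 1) * (|b - a| + 1)))
  have hδ : 0 < δ := by positivity
  have hδC : δ * C * |b - a| ≤ ε / 2 := by
    have hprod : C * |b - a| ≤ (C + 1) * (|b - a| + 1) := by
      nlinarith [abs_nonneg (b - a)]
    calc δ * C * |b - a| = ε / 2 * (C * |b - a| / ((C + 1) * (|b - a| + 1))) := by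
          simp only [δ]; field_simp
      _ ≤ ε / 2 * 1 := by
          gcongr; exact div_le_one_of_le₀ hprod (by positivity)
      _ = ε / 2 := mul_one _
  obtain ⟨p, hp⟩ := exists_polynomial_near_of_continuousOn _ _ ψ hψ δ hδ
  have hpK := tendsto_integral_mul_comp_div_of_contDiff hK hm hb hmean
    (by simpa using p.contDiff_aeval (𝕜 := ℝ) 1) a b
  filter_upwards [(Metric.tendsto_nhds.1 hpK) (ε / 2) (half_pos hε)] with l hl
  have hKl : IntervalIntegrable (fun x => K (x / l)) volume a b :=
    intervalIntegrable_of_abs_le (hm.comp (measurable_id.div_const l)) (fun x => hb _) a b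
  have happrox : |(∫ x in a..b, ψ x * K (x / l)) - ∫ x in a..b, p.eval x * K (x / l)|
      ≤ δ * C * |b - a| := by
    rw [← intervalIntegral.integral_sub (hKl.continuousOn_mul hψ)
      (hKl.continuousOn_mul p.continuous.continuousOn), ← Real.norm_eq_abs]
    refine intervalIntegral.norm_integral_le_of_norm_le_const fun x hx => ?_
    rw [← sub_mul, norm_mul, Real.norm_eq_abs, Real.norm_eq_abs, abs_sub_comm]
    exact mul_le_mul (hp x (Set.uIoc_subset_uIcc hx)).le (hb _) (abs_nonneg _) hδ.le
  rw [Real.dist_eq, sub_zero] at hl ⊢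
  linarith [abs_sub_abs_le_abs_sub (∫ x in a..b, ψ x * K (x / l))
    (∫ x in a..b, p.eval x * K (x / l))]

theorem tendsto_integral_mul_comp_div {K ψ : ℝ → ℝ} {C a b : ℝ}
    (hK : Function.Periodic K 1) (hm : Measurable K) (hb : ∀ x, |K x| ≤ C)
    (hψ : ContinuousOn ψ (Set.uIcc a b)) :
    Tendsto (fun l => ∫ x in a..b, ψ x * K (x / l)) (𝓝[>] 0)
      (𝓝 ((∫ y in (0:ℝ)..1, K y) * ∫ x in a..b, ψ x)) := by
  set m := ∫ y in (0:ℝ)..1, K y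
  have hK₀ : ∫ y in (0:ℝ)..1, (K y - m) = 0 := by
    rw [intervalIntegral.integral_sub (intervalIntegrable_of_abs_le hm hb 0 1)
      intervalIntegrable_const]
    simp [m]
  have hlim := tendsto_integral_mul_comp_div_of_integral_eq_zero (K := fun y => K y - m)
    (C := C + |m|)
    (fun y => by simp only [hK y]) (hm.sub_const m)
    (fun y => by linarith [hb y, abs_sub (K y) m]) hK₀ hψ
  rw [← zero_add (m * ∫ x in a..b, ψ x)]
  refine (hlim.add_const (m * ∫ x in a..b, ψ x)).congr fun l => ?_
  have hKl : IntervalIntegrable (fun x => K (x / l)) volume a b :=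
    intervalIntegrable_of_abs_le (hm.comp (measurable_id.div_const l)) (fun x => hb _) a b
  simp only [mul_sub, intervalIntegral.integral_sub (hKl.continuousOn_mul hψ)
    (hψ.intervalIntegrable.mul_const m), intervalIntegral.integral_mul_const]
  ring

theorem integral_id_mul_eq_neg_integral_integral {g : ℝ → ℝ}
    (hg : IntervalIntegrable g volume 0 1) (hmean : ∫ y in (0:ℝ)..1, g y = 0) :
    ∫ y in (0:ℝ)..1, y * g y = -∫ y in (0:ℝ)..1, ∫ t in (0:ℝ)..y, g t := by
  have hid : AbsolutelyContinuousOnInterval (fun y : ℝ => y) 0 1 :=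
    contDiffOn_id.absolutelyContinuousOnInterval
  rw [hid.integral_mul_eq_sub_integral_deriv_mul hg, hmean]
  simp

theorem sub_floor_div_mul_div_eq_fract {L l : ℝ} (hl : l ≠ 0) :
    (L - (⌊L / l⌋ : ℝ) * l) / l = Int.fract (L / l) := by
  rw [sub_div, mul_div_cancel_right₀ _ hl, Int.self_sub_floor]

theorem abs_integral_floor_mul_le {f : ℝ → ℝ} {C L l : ℝ} (hl : 0 < l)
    (hf : ∀ x ∈ Set.Icc ((⌊L / l⌋ : ℝ) * l) L, |f x| ≤ C) :
    |∫ x in ((⌊L / l⌋ : ℝ) * l)..L, f x| ≤ C * l := by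
  have hcell : L - (⌊L / l⌋ : ℝ) * l = l * Int.fract (L / l) := by
    rw [← sub_floor_div_mul_div_eq_fract hl.ne']; field_simp
  have hle : (⌊L / l⌋ : ℝ) * l ≤ L := by nlinarith [Int.fract_nonneg (L / l)]
  have hC : 0 ≤ C := (abs_nonneg _).trans (hf L ⟨hle, le_rfl⟩)
  rw [← Real.norm_eq_abs]
  calc ‖∫ x in ((⌊L / l⌋ : ℝ) * l)..L, f x‖ ≤ C * |L - (⌊L / l⌋ : ℝ) * l| :=
        intervalIntegral.norm_integral_le_of_norm_le_const fun x hx =>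
          hf x (Set.Ioc_subset_Icc_self (Set.uIoc_of_le hle ▸ hx))
    _ ≤ C * l := by
        rw [hcell, abs_of_nonneg (mul_nonneg hl.le (Int.fract_nonneg _))]
        exact mul_le_mul_of_nonneg_left
          (mul_le_of_le_one_right hl.le (Int.fract_lt_one _).le) hC

theorem integral_mul_comp_div_eq_of_periodic {φ g : ℝ → ℝ} {b l : ℝ} {n : ℤ}
    (hφ : AbsolutelyContinuousOnInterval φ (n * l) b) (hg : Function.Periodic g 1)
    (hint : ∀ a b, IntervalIntegrable g volume a b) (hmean : ∫ y in (0:ℝ)..1, g y = 0)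
    (hl : l ≠ 0) :
    ∫ x in (n * l)..b, φ x * ((1 / l) * g (x / l))
      = φ b * (∫ t in (0:ℝ)..b / l, g t)
        - ∫ x in (n * l)..b, deriv φ x * ∫ t in (0:ℝ)..x / l, g t := by
  have hn : ∫ t in (0:ℝ)..n * l / l, g t = 0 := by
    rw [mul_div_cancel_right₀ _ hl, ← mul_one (n : ℝ),
      (hg.periodic_intervalIntegral hint hmean).int_mul_eq]
    exact intervalIntegral.integral_same
  simp only [integral_mul_comp_div_eq hφ hint hl, hn, sub_zero]

theorem tendsto_integral_floor_mul_mul_comp_div {ψ K : ℝ → ℝ} {B L : ℝ} (hL : 0 ≤ L)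
    (hψ : ContinuousOn ψ (Set.Icc 0 L)) (hK : ∀ x, |K x| ≤ B) :
    Tendsto (fun l => ∫ x in ((⌊L / l⌋ : ℝ) * l)..L, ψ x * K (x / l)) (𝓝[>] 0) (𝓝 0) := by
  obtain ⟨C, hC⟩ := isCompact_Icc.exists_bound_of_continuousOn hψ
  refine squeeze_zero_norm' (a := fun l => C * B * l) ?_ ?_
  · filter_upwards [self_mem_nhdsWithin] with l (hl : 0 < l)
    have hN : 0 ≤ (⌊L / l⌋ : ℝ) * l :=
      mul_nonneg (Int.cast_nonneg (Int.floor_nonneg.2 (div_nonneg hL hl.le))) hl.le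
    refine abs_integral_floor_mul_le hl fun x hx => ?_
    rw [abs_mul]
    exact mul_le_mul (hC x ⟨hN.trans hx.1, hx.2⟩) (hK _) (abs_nonneg _)
      ((norm_nonneg _).trans (hC 0 ⟨le_rfl, hL⟩))
  · simpa using ((tendsto_id (x := 𝓝 (0:ℝ))).const_mul (C * B)).mono_left nhdsWithin_le_nhds

/-- one-dimensional polarization theorem with a boundary partial
cell: the partial cell contributes `φ(L) σ_l + o(1)` with `σ_l` bounded, and along
any subsequence with `σ_l → σ` the full integral converges to
`p₀ ∫₀^L φ' + φ(L) σ`. -/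
theorem stmt_10 (g φ : ℝ → ℝ) (L : ℝ) (hL : 0 < L) (B : ℝ)
    (hgb : ∀ x, |g x| ≤ B) (hgm : Measurable g)
    (hper : ∀ x, g (x + 1) = g x) (hmean : ∫ y in (0:ℝ)..1, g y = 0)
    (hφ : ContDiff ℝ 1 φ) :
    (∃ M : ℝ, ∀ l : ℝ, 0 < l →
      |∫ y in (0:ℝ)..((L - (⌊L / l⌋ : ℝ) * l) / l), g y| ≤ M) ∧
    (∃ e : ℝ → ℝ, Tendsto e (𝓝[>] 0) (𝓝 0) ∧ ∀ l : ℝ, 0 < l →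
      (∫ x in ((⌊L / l⌋ : ℝ) * l)..L, φ x * ((1 / l) * g (x / l)))
        = φ L * (∫ y in (0:ℝ)..((L - (⌊L / l⌋ : ℝ) * l) / l), g y) + e l) ∧
    ∀ (lseq : ℕ → ℝ) (σ : ℝ), (∀ n, 0 < lseq n) → Tendsto lseq atTop (𝓝 0) →
      Tendsto (fun n => ∫ y in (0:ℝ)..((L - (⌊L / lseq n⌋ : ℝ) * lseq n) / lseq n), g y)
        atTop (𝓝 σ) →
      Tendsto (fun n => ∫ x in (0:ℝ)..L, φ x * ((1 / lseq n) * g (x / lseq n))) atTop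
        (𝓝 ((∫ y in (0:ℝ)..1, y * g y) * (∫ x in (0:ℝ)..L, deriv φ x) + φ L * σ)) := by
  set G : ℝ → ℝ := fun x => ∫ t in (0:ℝ)..x, g t
  have hint := intervalIntegrable_of_abs_le hgm hgb
  have hGper : Function.Periodic G 1 := Function.Periodic.periodic_intervalIntegral hper hint hmean
  have hGb : ∀ x, |G x| ≤ B := abs_intervalIntegral_le_of_periodic hper hgm hgb hmean
  have hσ : ∀ l ≠ 0, ∫ y in (0:ℝ)..((L - (⌊L / l⌋ : ℝ) * l) / l), g y = G (L / l) :=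
    fun l hl => by rw [sub_floor_div_mul_div_eq_fract hl]; exact hGper.map_fract _
  have hcell : ∀ l ≠ 0, ∀ n : ℤ, ∫ x in (n * l)..L, φ x * ((1 / l) * g (x / l))
      = φ L * G (L / l) - ∫ x in (n * l)..L, deriv φ x * G (x / l) := fun l hl n =>
    integral_mul_comp_div_eq_of_periodic hφ.contDiffOn.absolutelyContinuousOnInterval hper hint
      hmean hl
  have hψ := (hφ.continuous_deriv le_rfl).continuousOn (s := Set.Icc 0 L)
  refine ⟨⟨B, fun l hl => hσ l hl.ne' ▸ hGb _⟩,
    ⟨fun l => -∫ x in ((⌊L / l⌋ : ℝ) * l)..L, deriv φ x * G (x / l), ?_, fun l hl => ?_⟩, ?_⟩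
  · simpa using (tendsto_integral_floor_mul_mul_comp_div hL.le hψ hGb).neg
  · rw [hcell l hl.ne', hσ l hl.ne', sub_eq_add_neg]
  · intro lseq σ hpos hto hσl
    have hl : Tendsto lseq atTop (𝓝[>] 0) :=
      tendsto_nhdsWithin_iff.2 ⟨hto, Eventually.of_forall hpos⟩
    have hbulk := (tendsto_integral_mul_comp_div hGper
      (intervalIntegral.continuous_primitive hint 0).measurable hGb
      (by rwa [Set.uIcc_of_le hL.le])).comp hl
    rw [integral_id_mul_eq_neg_integral_integral (hint 0 1) hmean]
    have := ((hσl.congr fun n => hσ _ (hpos n).ne').const_mul (φ L)).sub hbulk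
    convert this using 2 with n
    · simpa using hcell (lseq n) (hpos n).ne' 0
    · ring
end
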